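/- For all sufficiently large r, the matching width of T_r(P_{2r}) is at least (log₂ n)²/16, where n is the number of vertices of T_r(P_{2r}). -/

import Mathlib

open SimpleGraph

/-- There is a matching of size `t` in `G` all of whose edges have one end in `A` and the
other end outside `A`. -/
def HasCutMatching {V : Type} (G : SimpleGraph V) (A : Set V) (t : ℕ) : Prop :=
  ∃ a b : Fin t → V, Function.Injective a ∧ Function.Injective b ∧
    ∀ i, a i ∈ A ∧ b i ∉ A ∧ G.Adj (a i) (b i)

/-- The matching width of `G`: the minimum over all permutations (orderings) of `V(G)` of
the maximum, over all prefixes, of the size of a largest matching consisting of edges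
between the prefix and the rest of the vertices. -/
noncomputable def matchingWidth {V : Type} [Fintype V] (G : SimpleGraph V) : ℕ :=
  ⨅ σ : Fin (Fintype.card V) ≃ V, ⨆ i : Fin (Fintype.card V + 1),
    sSup {t | HasCutMatching G {v | ((σ.symm v : Fin (Fintype.card V)) : ℕ) < (i : ℕ)} t}

/-- The complete binary tree of height `r`, with `2^(r+1) - 1` vertices in heap
numbering: vertex `i` is adjacent to its children `2i+1` and `2i+2`. -/
def completeBinaryTree (r : ℕ) : SimpleGraph (Fin (2 ^ (r + 1) - 1)) :=
  SimpleGraph.fromRel (fun i j => (j : ℕ) = 2 * (i : ℕ) + 1 ∨ (j : ℕ) = 2 * (i : ℕ) + 2)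

/-!
Fix an ordering of the vertices and let the prefix grow one vertex at a time. Call a tree node
heavy when all but at most one of its columns (its copy of `H`) lie in the prefix, and empty
when none does. Take `2^h` nodes of a subtree and stop at the first time one of them is heavy:
either one of them is still empty, or each of them is split by the cut and, `H` being
connected, contributes a crossing edge inside its own copy of `H`, a cut matching of size `2^h`.

In the first case the subtree is good at that time: it holds a heavy and an empty node. Two
levels up, a node `j` has three pairwise disjoint subtrees, good at times `tA ≤ tC ≤ tB`. At
time `tC` the middle subtree keeps its matching, the first one still holds a heavy node `w` and
the last one an empty node `v`. In each column where `w` is in the prefix, the tree path from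
`w` or the one from `v` up to `j` changes sides; this adds `|β| - 1` crossing edges, one per
column and all outside the middle subtree. After `m` double levels every ordering has a cut
matching of size `min (m (|β| - 1)) (2^h)`. For `H = P_{2r}`, taking `h = 2 log₂ r` and
`m = (r - h) / 2` makes this at least `(r + log₂ r + 3)² / 16 ≥ (log₂ n)² / 16`.
-/

lemma Nat.exists_lt_and_not_succ {P : ℕ → Prop} {n : ℕ} (h₀ : P 0) (hn : ¬ P n) :
    ∃ k < n, P k ∧ ¬ P (k + 1) := by
  induction n with
  | zero => exact absurd h₀ hn
  | succ n ih =>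
    by_cases h : P n
    · exact ⟨n, n.lt_succ_self, h, hn⟩
    · obtain ⟨k, hk, hPk, hPk'⟩ := ih h
      exact ⟨k, by omega, hPk, hPk'⟩

section CutMatching

variable {V : Type}

def IsCutMatching (G : SimpleGraph V) (A : Set V) (M : Finset (V × V)) : Prop :=
  Set.InjOn Prod.fst (M : Set (V × V)) ∧ Set.InjOn Prod.snd (M : Set (V × V)) ∧
    ∀ e ∈ M, e.1 ∈ A ∧ e.2 ∉ A ∧ G.Adj e.1 e.2

variable {G : SimpleGraph V} {A : Set V}

lemma IsCutMatching.hasCutMatching {M : Finset (V × V)} (hM : IsCutMatching G A M) :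
    HasCutMatching G A M.card := by
  obtain ⟨hfst, hsnd, hcut⟩ := hM
  have hmem (i : Fin M.card) : (M.equivFin.symm i : V × V) ∈ M := (M.equivFin.symm i).2
  refine ⟨fun i => (M.equivFin.symm i : V × V).1, fun i => (M.equivFin.symm i : V × V).2,
    fun i j hij => ?_, fun i j hij => ?_, fun i => hcut _ (hmem i)⟩
  · exact M.equivFin.symm.injective (Subtype.ext (hfst (hmem i) (hmem j) hij))
  · exact M.equivFin.symm.injective (Subtype.ext (hsnd (hmem i) (hmem j) hij))

lemma HasCutMatching.mono {s t : ℕ} (h : HasCutMatching G A t) (hst : s ≤ t) :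
    HasCutMatching G A s := by
  obtain ⟨a, b, ha, hb, hcut⟩ := h
  exact ⟨a ∘ Fin.castLE hst, b ∘ Fin.castLE hst, ha.comp (Fin.castLE_injective hst),
    hb.comp (Fin.castLE_injective hst), fun i => hcut _⟩

lemma HasCutMatching.le_card [Fintype V] {t : ℕ} (h : HasCutMatching G A t) :
    t ≤ Fintype.card V := by
  obtain ⟨a, -, ha, -⟩ := h
  simpa using Fintype.card_le_of_injective a ha

lemma isCutMatching_empty : IsCutMatching G A ∅ := by
  simp [IsCutMatching]

lemma isCutMatching_image [DecidableEq V] {ι : Type} {C : Finset ι} {e : ι → V × V}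
    (hfst : Set.InjOn (Prod.fst ∘ e) C) (hsnd : Set.InjOn (Prod.snd ∘ e) C)
    (hcut : ∀ i ∈ C, (e i).1 ∈ A ∧ (e i).2 ∉ A ∧ G.Adj (e i).1 (e i).2) :
    IsCutMatching G A (C.image e) := by
  refine ⟨?_, ?_, ?_⟩
  · rw [Finset.coe_image]; exact hfst.image_of_comp
  · rw [Finset.coe_image]; exact hsnd.image_of_comp
  · simpa using hcut

lemma IsCutMatching.union [DecidableEq V] {M₁ M₂ : Finset (V × V)} {S : Set V}
    (h₁ : IsCutMatching G A M₁) (h₂ : IsCutMatching G A M₂)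
    (hS₁ : ∀ e ∈ M₁, e ∈ S ×ˢ S) (hS₂ : ∀ e ∈ M₂, e ∈ Sᶜ ×ˢ Sᶜ) :
    IsCutMatching G A (M₁ ∪ M₂) ∧ (M₁ ∪ M₂).card = M₁.card + M₂.card := by
  have hdisj : Disjoint (M₁ : Set (V × V)) M₂ :=
    Set.disjoint_of_subset (fun e he => hS₁ e he) (fun e he => hS₂ e he)
      (Set.disjoint_prod.mpr (Or.inl disjoint_compl_right))
  have hfar : ∀ e₁ ∈ (M₁ : Set (V × V)), ∀ e₂ ∈ (M₂ : Set (V × V)),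
      e₁.1 ≠ e₂.1 ∧ e₁.2 ≠ e₂.2 := fun e₁ he₁ e₂ he₂ =>
    ⟨fun h => (hS₂ e₂ he₂).1 (h ▸ (hS₁ e₁ he₁).1),
      fun h => (hS₂ e₂ he₂).2 (h ▸ (hS₁ e₁ he₁).2)⟩
  refine ⟨⟨?_, ?_, ?_⟩, Finset.card_union_of_disjoint (Finset.disjoint_coe.mp hdisj)⟩
  · rw [Finset.coe_union, Set.injOn_union hdisj]
    exact ⟨h₁.1, h₂.1, fun e₁ he₁ e₂ he₂ => (hfar e₁ he₁ e₂ he₂).1⟩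
  · rw [Finset.coe_union, Set.injOn_union hdisj]
    exact ⟨h₁.2.1, h₂.2.1, fun e₁ he₁ e₂ he₂ => (hfar e₁ he₁ e₂ he₂).2⟩
  · intro e he
    rcases Finset.mem_union.mp he with he | he
    exacts [h₁.2.2 e he, h₂.2.2 e he]

variable (G) in
lemma exists_cut_edge_of_chain {f : ℕ → V} {n : ℕ}
    (hf : ∀ k < n, f k ≠ f (k + 1) → G.Adj (f k) (f (k + 1))) (hA : f 0 ∈ A ↔ f n ∉ A) :
    ∃ p q, p ∈ A ∧ q ∉ A ∧ G.Adj p q ∧ p ∈ f '' Set.Iic n ∧ q ∈ f '' Set.Iic n := by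
  obtain ⟨k, hk, hsame, hflip⟩ :=
    Nat.exists_lt_and_not_succ (P := fun k => f k ∈ A ↔ f 0 ∈ A) (n := n) Iff.rfl (by tauto)
  have hside : f k ∈ A ↔ f (k + 1) ∉ A := by tauto
  have hadj := hf k hk fun h => by rw [h] at hside; tauto
  have hk₀ : f k ∈ f '' Set.Iic n := ⟨k, Set.mem_Iic.mpr hk.le, rfl⟩
  have hk₁ : f (k + 1) ∈ f '' Set.Iic n := ⟨k + 1, Set.mem_Iic.mpr hk, rfl⟩
  by_cases hin : f k ∈ A
  · exact ⟨_, _, hin, hside.mp hin, hadj, hk₀, hk₁⟩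
  · exact ⟨_, _, by tauto, hin, hadj.symm, hk₁, hk₀⟩

lemma exists_boxProd_adj_cut {α β : Type} {G : SimpleGraph α} {H : SimpleGraph β}
    (hH : H.Preconnected) {A : Set (α × β)} {a : α} {b b' : β}
    (hb : (a, b) ∈ A) (hb' : (a, b') ∉ A) :
    ∃ c c', (a, c) ∈ A ∧ (a, c') ∉ A ∧ (G □ H).Adj (a, c) (a, c') := by
  obtain ⟨d, -, hd, hd'⟩ := (hH b b').some.exists_boundary_dart {c | (a, c) ∈ A} hb hb'
  exact ⟨d.fst, d.snd, hd, hd', boxProd_adj_right.mpr d.adj⟩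

lemma hasCutMatching_boxProd_of_split {α β : Type} {G : SimpleGraph α} {H : SimpleGraph β}
    (hH : H.Preconnected) {A : Set (α × β)} (F : Finset α) (hin : ∀ u ∈ F, ∃ b, (u, b) ∈ A)
    (hout : ∀ u ∈ F, ∃ b, (u, b) ∉ A) : HasCutMatching (G □ H) A F.card := by
  classical
  have hsplit : ∀ u : F, ∃ c c', ((u : α), c) ∈ A ∧ ((u : α), c') ∉ A ∧
      (G □ H).Adj (u, c) (u, c') := fun ⟨u, hu⟩ => by
    obtain ⟨b, hb⟩ := hin u hu
    obtain ⟨b', hb'⟩ := hout u hu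
    exact exists_boxProd_adj_cut hH hb hb'
  choose c c' hc hc' hadj using hsplit
  have hinj : Set.InjOn (Prod.fst ∘ fun u : F => (((u : α), c u), ((u : α), c' u))) F.attach :=
    fun u _ u' _ h => Subtype.ext (congrArg Prod.fst h)
  rw [← F.card_attach, ← Finset.card_image_of_injOn hinj.of_comp]
  exact (isCutMatching_image hinj (fun u _ u' _ h => Subtype.ext (congrArg Prod.fst h))
    fun u _ => ⟨hc u, hc' u, hadj u⟩).hasCutMatching

end CutMatching

section Prefix

variable {V : Type} [Fintype V] (σ : Fin (Fintype.card V) ≃ V)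

def prefixSet (t : ℕ) : Set V := {v | (σ.symm v : ℕ) < t}

lemma prefixSet_mono : Monotone (prefixSet σ) :=
  fun _ _ hst _ hv => lt_of_lt_of_le hv hst

lemma notMem_prefixSet_zero (v : V) : v ∉ prefixSet σ 0 := Nat.not_lt_zero _

lemma mem_prefixSet_of_card_le {t : ℕ} (ht : Fintype.card V ≤ t) (v : V) :
    v ∈ prefixSet σ t :=
  lt_of_lt_of_le (σ.symm v).2 ht

lemma eq_of_mem_prefixSet_succ {t : ℕ} {v w : V} (hv : v ∈ prefixSet σ (t + 1))
    (hw : w ∈ prefixSet σ (t + 1)) (hv' : v ∉ prefixSet σ t) (hw' : w ∉ prefixSet σ t) :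
    v = w := by
  simp only [prefixSet, Set.mem_ofPred_eq, not_lt] at hv hw hv' hw'
  exact σ.symm.injective (Fin.ext (by omega))

lemma prefixSet_min_card (t : ℕ) : prefixSet σ (min t (Fintype.card V)) = prefixSet σ t := by
  ext v
  have := (σ.symm v).2
  simp only [prefixSet, Set.mem_ofPred_eq]
  omega

theorem le_matchingWidth (G : SimpleGraph V) {s : ℕ}
    (h : ∀ σ : Fin (Fintype.card V) ≃ V, ∃ t, HasCutMatching G (prefixSet σ t) s) :
    s ≤ matchingWidth G := by
  have : Nonempty (Fin (Fintype.card V) ≃ V) := ⟨(Fintype.equivFin V).symm⟩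
  refine le_ciInf fun σ => ?_
  obtain ⟨t, ht⟩ := h σ
  refine le_ciSup_of_le (Set.finite_range _).bddAbove ⟨min t (Fintype.card V), by omega⟩ ?_
  refine le_csSup ⟨Fintype.card V, fun u hu => hu.le_card⟩ ?_
  change HasCutMatching G (prefixSet σ (min t (Fintype.card V))) s
  rwa [prefixSet_min_card]

end Prefix

section Columns

variable {α β : Type}

noncomputable def colCount (S : Set (α × β)) (a : α) : ℕ := {b | (a, b) ∈ S}.ncard

variable {S S' : Set (α × β)}

lemma colCount_eq_card {a : α} (h : ∀ b, (a, b) ∈ S) : colCount S a = Nat.card β := by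
  rw [colCount, show {b | (a, b) ∈ S} = Set.univ from Set.eq_univ_of_forall h, Set.ncard_univ]

lemma exists_notMem_of_colCount_lt {a : α} (h : colCount S a < Nat.card β) : ∃ b, (a, b) ∉ S := by
  by_contra! hall
  exact h.ne (colCount_eq_card hall)

variable [Finite β]

lemma colCount_mono (h : S ⊆ S') (a : α) : colCount S a ≤ colCount S' a :=
  Set.ncard_le_ncard fun _ hb => h hb

lemma colCount_eq_zero {a : α} : colCount S a = 0 ↔ ∀ b, (a, b) ∉ S := by
  rw [colCount, Set.ncard_eq_zero, Set.eq_empty_iff_forall_notMem]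
  rfl

lemma colCount_le_succ (hS : ∀ v ∈ S', ∀ w ∈ S', v ∉ S → w ∉ S → v = w) (a : α) :
    colCount S' a ≤ colCount S a + 1 := by
  have hnew : {b | (a, b) ∈ S' ∧ (a, b) ∉ S}.ncard ≤ 1 :=
    (Set.ncard_le_one (Set.toFinite _)).mpr fun b hb c hc =>
      congrArg Prod.snd (hS _ hb.1 _ hc.1 hb.2 hc.2)
  calc colCount S' a ≤ ({b | (a, b) ∈ S} ∪ {b | (a, b) ∈ S' ∧ (a, b) ∉ S}).ncard :=
        Set.ncard_le_ncard fun b hb => by by_cases h : (a, b) ∈ S <;> simp_all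
    _ ≤ colCount S a + 1 := (Set.ncard_union_le _ _).trans (by rw [colCount]; omega)

end Columns

section PrefixColumns

variable {α β : Type} [Fintype α] [Fintype β] (σ : Fin (Fintype.card (α × β)) ≃ α × β) (a : α)

lemma colCount_prefixSet_zero : colCount (prefixSet σ 0) a = 0 :=
  colCount_eq_zero.mpr fun _ => notMem_prefixSet_zero σ _

lemma colCount_prefixSet_card : colCount (prefixSet σ (Fintype.card (α × β))) a = Nat.card β :=
  colCount_eq_card fun _ => mem_prefixSet_of_card_le σ le_rfl _

lemma colCount_prefixSet_succ_le (t : ℕ) :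
    colCount (prefixSet σ (t + 1)) a ≤ colCount (prefixSet σ t) a + 1 :=
  colCount_le_succ (fun _ hv _ hw => eq_of_mem_prefixSet_succ σ hv hw) a

end PrefixColumns

-- `heapParent 0 = 0`: iterated ancestors stay at the root, so consecutive ones may coincide.
def heapParent (m : ℕ) : ℕ := (m - 1) / 2

def heapSubtree (j : ℕ) : Set ℕ := {m | ∃ e, heapParent^[e] m = j}

lemma iterate_heapParent_le (k m : ℕ) : heapParent^[k] m ≤ m := by
  induction k generalizing m with
  | zero => rfl
  | succ k ih =>
    rw [Function.iterate_succ_apply]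
    exact (ih _).trans (by unfold heapParent; omega)

lemma heapSubtree_subset {g j : ℕ} (h : g ∈ heapSubtree j) :
    heapSubtree g ⊆ heapSubtree j := by
  rintro m ⟨e, rfl⟩
  obtain ⟨e', rfl⟩ := h
  exact ⟨e' + e, Function.iterate_add_apply _ _ _ _⟩

lemma eq_or_two_mul_add_one_le_of_mem_heapSubtree {g m : ℕ} (h : m ∈ heapSubtree g) :
    m = g ∨ 2 * g + 1 ≤ m := by
  obtain ⟨_ | e, rfl⟩ := h
  · exact Or.inl rfl
  · have := iterate_heapParent_le e m
    rw [Function.iterate_succ_apply', heapParent]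
    omega

lemma heapSubtree_total {g g' m : ℕ} (h : m ∈ heapSubtree g) (h' : m ∈ heapSubtree g') :
    g' ∈ heapSubtree g ∨ g ∈ heapSubtree g' := by
  obtain ⟨e, rfl⟩ := h
  obtain ⟨e', rfl⟩ := h'
  rcases le_total e e' with hle | hle
  · refine Or.inr ⟨e' - e, ?_⟩
    rw [← Function.iterate_add_apply, Nat.sub_add_cancel hle]
  · refine Or.inl ⟨e - e', ?_⟩
    rw [← Function.iterate_add_apply, Nat.sub_add_cancel hle]

lemma disjoint_heapSubtree {g g' : ℕ} (hne : g ≠ g') (h : g < 2 * g' + 1)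
    (h' : g' < 2 * g + 1) :
    Disjoint (heapSubtree g) (heapSubtree g') := by
  refine Set.disjoint_left.mpr fun m hm hm' => ?_
  rcases heapSubtree_total hm hm' with hg | hg
  · rcases eq_or_two_mul_add_one_le_of_mem_heapSubtree hg with rfl | hle <;> omega
  · rcases eq_or_two_mul_add_one_le_of_mem_heapSubtree hg with rfl | hle <;> omega

lemma iterate_heapParent_level (e : ℕ) {o : ℕ} (ho : o < 2 ^ e) (j : ℕ) :
    heapParent^[e] ((j + 1) * 2 ^ e - 1 + o) = j := by
  induction e generalizing o with
  | zero => simp_all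
  | succ e ih =>
    have hpos : 0 < (j + 1) * 2 ^ e := by positivity
    have hparent :
        heapParent ((j + 1) * 2 ^ (e + 1) - 1 + o) = (j + 1) * 2 ^ e - 1 + o / 2 := by
      rw [heapParent, pow_succ, ← mul_assoc]
      omega
    rw [Function.iterate_succ_apply, hparent, ih (by rw [pow_succ] at ho; omega)]

lemma iterate_heapParent_mem_diff {g g' j m e k : ℕ} (hm : m ∈ heapSubtree g)
    (hgg' : Disjoint (heapSubtree g) (heapSubtree g')) (he : heapParent^[e] m = j) (hk : k ≤ e) :
    heapParent^[k] m ∈ heapSubtree j \ heapSubtree g' := by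
  refine ⟨⟨e - k, ?_⟩, fun hk' => Set.disjoint_left.mp hgg' hm (heapSubtree_subset hk' ⟨k, rfl⟩)⟩
  rw [← Function.iterate_add_apply, Nat.sub_add_cancel hk, he]

section Tree

variable {r : ℕ}

def treeAncestor (u : Fin (2 ^ (r + 1) - 1)) (k : ℕ) : Fin (2 ^ (r + 1) - 1) :=
  ⟨heapParent^[k] u, (iterate_heapParent_le k u).trans_lt u.2⟩

lemma completeBinaryTree_adj_treeAncestor (u : Fin (2 ^ (r + 1) - 1)) (k : ℕ)
    (hne : treeAncestor u k ≠ treeAncestor u (k + 1)) :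
    (completeBinaryTree r).Adj (treeAncestor u k) (treeAncestor u (k + 1)) := by
  have hval : (treeAncestor u (k + 1) : ℕ) = heapParent (treeAncestor u k) :=
    Function.iterate_succ_apply' _ _ _
  have hne' : (treeAncestor u k : ℕ) ≠ treeAncestor u (k + 1) := Fin.val_ne_of_ne hne
  rw [completeBinaryTree, fromRel_adj]
  refine ⟨hne, Or.inr ?_⟩
  rw [hval, heapParent] at hne' ⊢
  omega

lemma exists_finset_heapSubtree_card {j h : ℕ} (hfit : (j + 2) * 2 ^ h ≤ 2 ^ (r + 1)) :
    ∃ F : Finset (Fin (2 ^ (r + 1) - 1)),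
      (∀ u ∈ F, (u : ℕ) ∈ heapSubtree j) ∧ F.card = 2 ^ h := by
  have hpos : 0 < 2 ^ h := by positivity
  have hsplit : (j + 2) * 2 ^ h = (j + 1) * 2 ^ h + 2 ^ h := by ring
  have hlo : 0 < (j + 1) * 2 ^ h := by positivity
  refine ⟨Finset.Icc ⟨(j + 1) * 2 ^ h - 1, by omega⟩ ⟨(j + 2) * 2 ^ h - 2, by omega⟩,
    fun u hu => ⟨h, ?_⟩, by simp only [Fin.card_Icc]; omega⟩
  obtain ⟨hu₁, hu₂⟩ := Finset.mem_Icc.mp hu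
  rw [Fin.le_def] at hu₁ hu₂
  simp only at hu₁ hu₂
  have := iterate_heapParent_level h (o := u - ((j + 1) * 2 ^ h - 1)) (by omega) j
  rwa [Nat.add_sub_cancel' hu₁] at this

end Tree

section Development

variable {β : Type} {H : SimpleGraph β} {r : ℕ}

def subtreeBlock (j : ℕ) : Set (Fin (2 ^ (r + 1) - 1) × β) :=
  {v | (v.1 : ℕ) ∈ heapSubtree j}

lemma subtreeBlock_mono {g j : ℕ} (h : g ∈ heapSubtree j) :
    (subtreeBlock g : Set (Fin (2 ^ (r + 1) - 1) × β)) ⊆ subtreeBlock j :=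
  fun _ hv => heapSubtree_subset h hv

lemma exists_cut_edge_on_ancestor_chain {A : Set (Fin (2 ^ (r + 1) - 1) × β)}
    {g g' j e : ℕ} {u : Fin (2 ^ (r + 1) - 1)} (hu : (u : ℕ) ∈ heapSubtree g)
    (hgg' : Disjoint (heapSubtree g) (heapSubtree g')) (he : heapParent^[e] u = j) (b : β)
    (hA : (u, b) ∈ A ↔ (treeAncestor u e, b) ∉ A) :
    ∃ p q, p ∈ A ∧ q ∉ A ∧ (completeBinaryTree r □ H).Adj p q ∧ p.2 = b ∧ q.2 = b ∧
      p ∈ subtreeBlock j \ subtreeBlock g' ∧ q ∈ subtreeBlock j \ subtreeBlock g' := by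
  obtain ⟨p, q, hp, hq, hpq, ⟨k, hk, rfl⟩, ⟨k', hk', rfl⟩⟩ :=
    exists_cut_edge_of_chain (completeBinaryTree r □ H) (f := fun k => (treeAncestor u k, b))
      (fun k _ hne => boxProd_adj_left.mpr
        (completeBinaryTree_adj_treeAncestor u k fun h => hne (by rw [h])))
      hA
  exact ⟨_, _, hp, hq, hpq, rfl, rfl, iterate_heapParent_mem_diff hu hgg' he hk,
    iterate_heapParent_mem_diff hu hgg' he hk'⟩

lemma exists_column_cutMatching [Finite β] {A : Set (Fin (2 ^ (r + 1) - 1) × β)}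
    {j gw gv g' : ℕ} {w v : Fin (2 ^ (r + 1) - 1)} (hw : (w : ℕ) ∈ heapSubtree gw)
    (hv : (v : ℕ) ∈ heapSubtree gv) (hgw : gw ∈ heapSubtree j) (hgv : gv ∈ heapSubtree j)
    (hdw : Disjoint (heapSubtree gw) (heapSubtree g'))
    (hdv : Disjoint (heapSubtree gv) (heapSubtree g')) (hv_empty : ∀ b, (v, b) ∉ A) :
    ∃ M, IsCutMatching (completeBinaryTree r □ H) A M ∧
      (∀ e ∈ M, e ∈ (subtreeBlock j \ subtreeBlock g') ×ˢ (subtreeBlock j \ subtreeBlock g')) ∧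
      colCount A w ≤ M.card := by
  classical
  obtain ⟨e, he⟩ := heapSubtree_subset hgw hw
  obtain ⟨e', he'⟩ := heapSubtree_subset hgv hv
  have hroot : treeAncestor v e' = treeAncestor w e := Fin.ext (he'.trans he.symm)
  let C := (Set.toFinite {b | (w, b) ∈ A}).toFinset
  -- In a column where `w` is in `A`, the chain up to `j` from `w` or from `v` changes sides.
  have hcol : ∀ b : C, ∃ p q, p ∈ A ∧ q ∉ A ∧ (completeBinaryTree r □ H).Adj p q ∧
      p.2 = b ∧ q.2 = b ∧ p ∈ subtreeBlock j \ subtreeBlock g' ∧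
        q ∈ subtreeBlock j \ subtreeBlock g' := by
    rintro ⟨b, hb⟩
    have hwb : (w, b) ∈ A := by simpa [C] using hb
    by_cases hj : (treeAncestor w e, b) ∈ A
    · exact exists_cut_edge_on_ancestor_chain hv hdv he' b (by rw [hroot]; tauto)
    · exact exists_cut_edge_on_ancestor_chain hw hdw he b (by tauto)
  choose p q hp hq hadj hp₂ hq₂ hpB hqB using hcol
  have hinj : Set.InjOn (Prod.fst ∘ fun b => (p b, q b)) C.attach := fun b _ b' _ h =>
    Subtype.ext ((hp₂ b).symm.trans ((congrArg Prod.snd h).trans (hp₂ b')))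
  refine ⟨C.attach.image fun b => (p b, q b), isCutMatching_image hinj
    (fun b _ b' _ h => Subtype.ext ((hq₂ b).symm.trans ((congrArg Prod.snd h).trans (hq₂ b'))))
    (fun b _ => ⟨hp b, hq b, hadj b⟩), ?_, ?_⟩
  · simp only [Finset.mem_image]
    rintro _ ⟨b, -, rfl⟩
    exact ⟨hpB b, hqB b⟩
  · rw [Finset.card_image_of_injOn hinj.of_comp, Finset.card_attach, colCount,
      Set.ncard_eq_toFinset_card]

variable [Fintype β]
  (σ : Fin (Fintype.card (Fin (2 ^ (r + 1) - 1) × β)) ≃ Fin (2 ^ (r + 1) - 1) × β)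

variable (H) in
structure GoodAt (j s t : ℕ) : Prop where
  matching : ∃ M, IsCutMatching (completeBinaryTree r □ H) (prefixSet σ t) M ∧
    (∀ e ∈ M, e ∈ subtreeBlock j ×ˢ subtreeBlock j) ∧ s ≤ M.card
  heavy : ∃ w : Fin (2 ^ (r + 1) - 1),
    (w : ℕ) ∈ heapSubtree j ∧ Nat.card β - 1 ≤ colCount (prefixSet σ t) w
  empty : ∃ v : Fin (2 ^ (r + 1) - 1), (v : ℕ) ∈ heapSubtree j ∧ ∀ b, (v, b) ∉ prefixSet σ t

end Development

lemma exists_median (t : Fin 3 → ℕ) : ∃ a b c, a ≠ c ∧ b ≠ c ∧ t a ≤ t c ∧ t c ≤ t b := by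
  rcases le_total (t 0) (t 1) with h01 | h01 <;> rcases le_total (t 1) (t 2) with h12 | h12 <;>
    rcases le_total (t 0) (t 2) with h02 | h02
  all_goals first
    | exact ⟨0, 2, 1, by decide, by decide, h01, h12⟩
    | exact ⟨2, 0, 1, by decide, by decide, h12, h01⟩
    | exact ⟨1, 2, 0, by decide, by decide, h01, h02⟩
    | exact ⟨2, 1, 0, by decide, by decide, h02, h01⟩
    | exact ⟨0, 1, 2, by decide, by decide, h02, h12⟩
    | exact ⟨1, 0, 2, by decide, by decide, h12, h02⟩

section Induction

variable {β : Type} [Fintype β] {H : SimpleGraph β} {r : ℕ}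
  {σ : Fin (Fintype.card (Fin (2 ^ (r + 1) - 1) × β)) ≃ Fin (2 ^ (r + 1) - 1) × β}

lemma GoodAt.combine {j gA gB gC sA sB s tA tB tC : ℕ} (GA : GoodAt H σ gA sA tA)
    (GB : GoodAt H σ gB sB tB) (GC : GoodAt H σ gC s tC) (hA : gA ∈ heapSubtree j)
    (hB : gB ∈ heapSubtree j) (hC : gC ∈ heapSubtree j)
    (hAC : Disjoint (heapSubtree gA) (heapSubtree gC))
    (hBC : Disjoint (heapSubtree gB) (heapSubtree gC)) (htA : tA ≤ tC) (htB : tC ≤ tB) :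
    GoodAt H σ j (s + (Nat.card β - 1)) tC := by
  classical
  obtain ⟨w, hw, hw_heavy⟩ := GA.heavy
  obtain ⟨v, hv, hv_empty⟩ := GB.empty
  obtain ⟨M₁, hM₁, hM₁S, hM₁card⟩ := GC.matching
  have hw_heavy' := hw_heavy.trans (colCount_mono (prefixSet_mono σ htA) w)
  have hv_empty' : ∀ b, (v, b) ∉ prefixSet σ tC :=
    fun b hb => hv_empty b (prefixSet_mono σ htB hb)
  obtain ⟨M₂, hM₂, hM₂S, hM₂card⟩ :=
    exists_column_cutMatching (H := H) hw hv hA hB hAC hBC hv_empty'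
  obtain ⟨hM, hcard⟩ := hM₁.union hM₂ hM₁S
    fun e he => Set.prod_mono (Set.sdiff_subset_compl _ _) (Set.sdiff_subset_compl _ _)
      (hM₂S e he)
  refine ⟨⟨M₁ ∪ M₂, hM, fun e he => ?_, by omega⟩, ⟨w, heapSubtree_subset hA hw, hw_heavy'⟩,
    ⟨v, heapSubtree_subset hB hv, hv_empty'⟩⟩
  rcases Finset.mem_union.mp he with he | he
  · exact Set.prod_mono (subtreeBlock_mono hC) (subtreeBlock_mono hC) (hM₁S e he)
  · exact Set.prod_mono Set.sdiff_subset Set.sdiff_subset (hM₂S e he)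

lemma exists_goodAt_zero_or_hasCutMatching (hH : H.Preconnected) {j : ℕ}
    {F : Finset (Fin (2 ^ (r + 1) - 1))} (hF : ∀ u ∈ F, (u : ℕ) ∈ heapSubtree j)
    (hFne : F.Nonempty) :
    (∃ t, GoodAt H σ j 0 t) ∨
      ∃ t, HasCutMatching (completeBinaryTree r □ H) (prefixSet σ t) F.card := by
  set θ := Nat.card β - 1
  have hex : ∃ t, ∃ u ∈ F, θ ≤ colCount (prefixSet σ t) u := by
    obtain ⟨u, hu⟩ := hFne
    exact ⟨_, u, hu, (colCount_prefixSet_card σ u).ge.trans' (Nat.sub_le _ 1)⟩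
  classical
  set τ := Nat.find hex
  obtain ⟨w, hwF, hw⟩ := Nat.find_spec hex
  have hle : ∀ u ∈ F, colCount (prefixSet σ τ) u ≤ θ := by
    intro u hu
    rcases Nat.eq_zero_or_pos τ with h0 | hpos
    · rw [h0, colCount_prefixSet_zero]
      exact Nat.zero_le _
    · have hprev : ¬ θ ≤ colCount (prefixSet σ (τ - 1)) u := fun h =>
        Nat.find_min hex (show τ - 1 < τ by omega) ⟨u, hu, h⟩
      have hstep := colCount_prefixSet_succ_le σ u (τ - 1)
      rw [Nat.sub_add_cancel hpos] at hstep
      omega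
  by_cases hempty : ∃ v ∈ F, ∀ b, (v, b) ∉ prefixSet σ τ
  · obtain ⟨v, hvF, hv⟩ := hempty
    exact Or.inl ⟨τ, ⟨⟨∅, isCutMatching_empty, by simp, le_rfl⟩, ⟨w, hF w hwF, hw⟩,
      ⟨v, hF v hvF, hv⟩⟩⟩
  push Not at hempty
  refine Or.inr ⟨τ, hasCutMatching_boxProd_of_split hH F hempty fun u hu => ?_⟩
  obtain ⟨b, hb⟩ := hempty u hu
  have hpos : 0 < Nat.card β := Nat.card_pos_iff.mpr ⟨⟨b⟩, inferInstance⟩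
  exact exists_notMem_of_colCount_lt ((hle u hu).trans_lt (by omega))

lemma exists_goodAt_or_hasCutMatching (hH : H.Preconnected) {h m j : ℕ}
    (hfit : (j + 2) * 2 ^ (2 * m + h) ≤ 2 ^ (r + 1)) :
    (∃ t, GoodAt H σ j (m * (Nat.card β - 1)) t) ∨
      ∃ t, HasCutMatching (completeBinaryTree r □ H) (prefixSet σ t) (2 ^ h) := by
  induction m generalizing j with
  | zero =>
    obtain ⟨F, hF, hcard⟩ := exists_finset_heapSubtree_card (by simpa using hfit)
    rw [← hcard, zero_mul]
    exact exists_goodAt_zero_or_hasCutMatching hH hF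
      (Finset.card_pos.mp (by rw [hcard]; positivity))
  | succ m ih =>
    by_cases hbig : ∃ t, HasCutMatching (completeBinaryTree r □ H) (prefixSet σ t) (2 ^ h)
    · exact Or.inr hbig
    -- Pairwise disjoint subtrees of `j`, at most two levels lower.
    let g : Fin 3 → ℕ := ![4 * j + 3, 4 * j + 4, 2 * j + 2]
    have hg : ∀ i, 2 * j + 2 ≤ g i ∧ g i ≤ 4 * j + 4 ∧ g i ∈ heapSubtree j := by
      intro i
      fin_cases i
      · exact ⟨by simp [g]; omega, by simp [g], 2, by simp [g, heapParent]; omega⟩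
      · exact ⟨by simp [g]; omega, by simp [g], 2, by simp [g, heapParent]; omega⟩
      · exact ⟨by simp [g], by simp [g]; omega, 1, by simp [g, heapParent]; omega⟩
    have hdisj : ∀ a c, a ≠ c → Disjoint (heapSubtree (g a)) (heapSubtree (g c)) := by
      intro a c hac
      refine disjoint_heapSubtree ?_ (by grind) (by grind)
      fin_cases a <;> fin_cases c <;> simp_all [g] <;> omega
    have hfit' : ∀ i, (g i + 2) * 2 ^ (2 * m + h) ≤ 2 ^ (r + 1) := by
      intro i
      calc (g i + 2) * 2 ^ (2 * m + h) ≤ (j + 2) * (4 * 2 ^ (2 * m + h)) := by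
            nlinarith [(hg i).2.1, Nat.one_le_two_pow (n := 2 * m + h)]
        _ = (j + 2) * 2 ^ (2 * (m + 1) + h) := by ring
        _ ≤ 2 ^ (r + 1) := hfit
    choose t ht using fun i => (ih (hfit' i)).resolve_right hbig
    obtain ⟨a, b, c, hac, hbc, hta, htb⟩ := exists_median t
    refine Or.inl ⟨t c, ?_⟩
    rw [Nat.succ_mul]
    exact (ht a).combine (ht b) (ht c) (hg a).2.2 (hg b).2.2 (hg c).2.2 (hdisj a c hac)
      (hdisj b c hbc) hta htb

theorem min_le_matchingWidth_completeBinaryTree_boxProd (hH : H.Preconnected) {h m : ℕ}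
    (hr : 2 * m + h ≤ r) :
    min (m * (Nat.card β - 1)) (2 ^ h) ≤ matchingWidth (completeBinaryTree r □ H) := by
  refine le_matchingWidth _ fun σ => ?_
  have hfit : (0 + 2) * 2 ^ (2 * m + h) ≤ 2 ^ (r + 1) := by
    rw [zero_add, mul_comm, ← pow_succ]
    exact Nat.pow_le_pow_right two_pos (by omega)
  rcases exists_goodAt_or_hasCutMatching (σ := σ) hH hfit with ⟨t, hgood⟩ | ⟨t, ht⟩
  · obtain ⟨M, hM, -, hcard⟩ := hgood.matching
    exact ⟨t, hM.hasCutMatching.mono ((min_le_left _ _).trans hcard)⟩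
  · exact ⟨t, ht.mono (min_le_right _ _)⟩

end Induction

lemma four_mul_log_add_two_le {r : ℕ} (hr : 128 ≤ r) : 4 * Nat.log 2 r + 2 ≤ r := by
  set k := Nat.log 2 r
  have hk : 7 ≤ k := Nat.le_log_of_pow_le one_lt_two (by norm_num; omega)
  have hpow : 2 ^ k ≤ r := Nat.pow_log_le_self 2 (by omega)
  have hlin : k - 3 < 2 ^ (k - 3) := Nat.lt_two_pow_self
  have hsplit : 2 ^ k = 2 ^ (k - 3) * 8 := by
    rw [show (8 : ℕ) = 2 ^ 3 by norm_num, ← pow_add, Nat.sub_add_cancel (by omega)]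
  omega

lemma card_le_two_pow_add_log (r : ℕ) :
    (2 ^ (r + 1) - 1) * (2 * r) ≤ 2 ^ (r + Nat.log 2 r + 3) := by
  have hlt : r < 2 ^ (Nat.log 2 r + 1) := Nat.lt_pow_succ_log_self one_lt_two r
  calc (2 ^ (r + 1) - 1) * (2 * r) ≤ 2 ^ (r + 1) * 2 ^ (Nat.log 2 r + 2) := by
        gcongr
        · exact Nat.sub_le _ _
        · rw [pow_succ]; omega
    _ = 2 ^ (r + Nat.log 2 r + 3) := by rw [← pow_add]; ring_nf

lemma sq_le_sixteen_mul_min {r : ℕ} (hr : 128 ≤ r) :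
    (r + Nat.log 2 r + 3) ^ 2 ≤
      16 * min ((r - 2 * Nat.log 2 r) / 2 * (2 * r - 1)) (2 ^ (2 * Nat.log 2 r)) := by
  set k := Nat.log 2 r
  have hsmall := four_mul_log_add_two_le hr
  have hlt : r < 2 * 2 ^ k := by
    have := Nat.lt_pow_succ_log_self one_lt_two r
    rwa [pow_succ, mul_comm] at this
  have hL : r + k + 3 ≤ 2 * r := by omega
  rcases min_cases ((r - 2 * k) / 2 * (2 * r - 1)) (2 ^ (2 * k)) with ⟨hmin, -⟩ | ⟨hmin, -⟩
    <;> rw [hmin]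
  · have hM : r ≤ 4 * ((r - 2 * k) / 2) := by omega
    have hr' : r ≤ 2 * r - 1 := by omega
    calc (r + k + 3) ^ 2 ≤ (2 * r) ^ 2 := Nat.pow_le_pow_left hL 2
      _ ≤ 16 * ((r - 2 * k) / 2 * (2 * r - 1)) := by nlinarith
  · calc (r + k + 3) ^ 2 ≤ (2 * r) ^ 2 := Nat.pow_le_pow_left hL 2
      _ ≤ 16 * 2 ^ (2 * k) := by rw [pow_mul']; nlinarith

lemma sq_logb_card_le {r : ℕ} (hr : 1 ≤ r) :
    Real.logb 2 (Fintype.card (Fin (2 ^ (r + 1) - 1) × Fin (2 * r)) : ℝ) ^ 2 ≤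
      ((r + Nat.log 2 r + 3 : ℕ) : ℝ) ^ 2 := by
  have hcard :
      Fintype.card (Fin (2 ^ (r + 1) - 1) × Fin (2 * r)) = (2 ^ (r + 1) - 1) * (2 * r) := by
    simp
  have hpos : 0 < (2 ^ (r + 1) - 1) * (2 * r) := by
    have : 2 ≤ 2 ^ (r + 1) := Nat.le_self_pow (by omega) 2
    exact Nat.mul_pos (by omega) (by omega)
  rw [hcard]
  have hpos' : (1 : ℝ) ≤ ((2 ^ (r + 1) - 1) * (2 * r) : ℕ) := by exact_mod_cast hpos
  refine pow_le_pow_left₀ (Real.logb_nonneg one_lt_two hpos') ?_ 2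
  rw [Real.logb_le_iff_le_rpow one_lt_two (by linarith), Real.rpow_natCast]
  exact_mod_cast card_le_two_pow_add_log r

/-- For all sufficiently large `r`, the matching width of `T_r(P_{2r})` is at least
`(log₂ n)²/16`, where `n` is the number of vertices of `T_r(P_{2r})`. -/
theorem matchingWidth_tree_path_lb :
    ∃ r₀ : ℕ, ∀ r : ℕ, r₀ ≤ r →
      (Real.logb 2 ((Fintype.card (Fin (2 ^ (r + 1) - 1) × Fin (2 * r)) : ℕ) : ℝ)) ^ 2 / 16 ≤
        (matchingWidth (completeBinaryTree r □ SimpleGraph.pathGraph (2 * r)) : ℝ) := by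
  refine ⟨128, fun r hr => ?_⟩
  have hmw := min_le_matchingWidth_completeBinaryTree_boxProd (pathGraph_preconnected (2 * r))
    (r := r) (h := 2 * Nat.log 2 r) (m := (r - 2 * Nat.log 2 r) / 2)
    (by have := four_mul_log_add_two_le hr; omega)
  rw [Nat.card_eq_fintype_card, Fintype.card_fin] at hmw
  have hbound : ((r + Nat.log 2 r + 3 : ℕ) : ℝ) ^ 2 ≤
      16 * (matchingWidth (completeBinaryTree r □ pathGraph (2 * r)) : ℝ) := by
    exact_mod_cast (sq_le_sixteen_mul_min hr).trans (Nat.mul_le_mul_left 16 hmw)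
  have hlog := sq_logb_card_le (by omega : 1 ≤ r)
  linarith
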